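/- arXiv:2209.00801 — 5 statements merged into one kernel-verified Lean document; each statement's English description precedes it below -/
import Mathlib

section
/- Every non-bipartite triangle-free graph of order n and size m satisfies m ≤ (n-1)²/4 + 1. -/
/-!
Let `w` be a shortest odd closed walk in `G`, of length `g`. Triangle-freeness gives `g ≥ 5`,
and minimality makes `w` a cycle on a set `S` of `g` vertices. Two neighbours of a vertex `v` at
positions `i < j` on `w` close up, through `v`, with one of the two arcs of `w` into an odd
closed walk; minimality forces `j - i ∈ {2, g - 2}`, and three such positions are incompatible
for odd `g ≥ 5`. So every vertex has at most two neighbours in `S`, and counting edges according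
to whether they meet `S`, with Mantel's theorem on the rest, gives
`4m ≤ 4n + 4(n - g) + (n - g)² ≤ (n - 1)² + 4`.
-/

open SimpleGraph Matrix Finset BigOperators

/-- The signless Laplacian matrix `Q(G) = D(G) + A(G)` of a simple graph, over `ℝ`. -/
noncomputable def signlessLaplacian {V : Type*} [Fintype V] [DecidableEq V]
    (G : SimpleGraph V) : Matrix V V ℝ :=
  letI := Classical.decRel G.Adj
  G.degMatrix ℝ + G.adjMatrix ℝ

/-- The `Q`-index of a graph: the largest eigenvalue of its signless Laplacian matrix. -/
noncomputable def qIndex {V : Type*} [Fintype V] [DecidableEq V] (G : SimpleGraph V) : ℝ :=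
  sSup (spectrum ℝ (signlessLaplacian G))

/-- The blow-up `C₅ ∘ (r₁,…,r₅)` of the 5-cycle: vertex `vᵢ` of `C₅` is replaced by an
independent set of `r i` vertices, and classes of adjacent cycle vertices are fully joined. -/
def C5blowup (r : Fin 5 → ℕ) : SimpleGraph ((i : Fin 5) × Fin (r i)) where
  Adj a b := a.1 = b.1 + 1 ∨ b.1 = a.1 + 1
  symm := ⟨fun a b h => Or.symm h⟩
  loopless := ⟨fun a h => by
    have h5 : ∀ i : Fin 5, ¬ i = i + 1 := by decide
    rcases h with h | h <;> exact h5 _ h⟩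

/-- The graph `C₅ • K_{1,t}` obtained by identifying a vertex of the 5-cycle
(the vertex `Sum.inl 0`) with the center of the star `K_{1,t}`. -/
def C5star (t : ℕ) : SimpleGraph (Fin 5 ⊕ Fin t) where
  Adj a b :=
    (∃ i j : Fin 5, a = Sum.inl i ∧ b = Sum.inl j ∧ (i = j + 1 ∨ j = i + 1)) ∨
    (a = Sum.inl 0 ∧ ∃ j : Fin t, b = Sum.inr j) ∨
    (b = Sum.inl 0 ∧ ∃ j : Fin t, a = Sum.inr j)
  symm := ⟨fun a b h => by
    rcases h with ⟨i, j, hi, hj, hij⟩ | ⟨h1, j, h2⟩ | ⟨h1, j, h2⟩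
    · exact Or.inl ⟨j, i, hj, hi, Or.symm hij⟩
    · exact Or.inr (Or.inr ⟨h1, j, h2⟩)
    · exact Or.inr (Or.inl ⟨h1, j, h2⟩)⟩
  loopless := ⟨fun a h => by
    have h5 : ∀ i : Fin 5, ¬ i = i + 1 := by decide
    rcases h with ⟨i, j, hi, hj, hij⟩ | ⟨h1, j, h2⟩ | ⟨h1, j, h2⟩
    · subst hi; cases hj; rcases hij with h | h <;> exact h5 _ h
    · subst h1; simp at h2
    · subst h1; simp at h2⟩

/-- The star `K_{1,t}` with center `0` and `t` leaves. -/
def starG (t : ℕ) : SimpleGraph (Fin (t + 1)) where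
  Adj a b := a ≠ b ∧ (a = 0 ∨ b = 0)
  symm := ⟨fun a b h => ⟨h.1.symm, h.2.symm⟩⟩
  loopless := ⟨fun a h => h.1 rfl⟩

namespace SimpleGraph

variable {V : Type*} {G : SimpleGraph V}

/-- **Mantel's theorem**, as the case `r = 2` of Turán's bound. -/
theorem CliqueFree.four_mul_card_edgeFinset_le [Fintype V] [DecidableRel G.Adj]
    (h : G.CliqueFree 3) : 4 * #G.edgeFinset ≤ Fintype.card V ^ 2 := by
  have hT := CliqueFree.card_edgeFinset_le (r := 2) h
  dsimp only at hT
  rw [Nat.choose_eq_zero_of_lt (Nat.mod_lt _ two_pos), add_zero, Nat.add_one_sub_one,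
    mul_one] at hT
  calc 4 * #G.edgeFinset ≤ 4 * ((Fintype.card V ^ 2 - (Fintype.card V % 2) ^ 2) / (2 * 2)) := by
        gcongr
    _ ≤ Fintype.card V ^ 2 - (Fintype.card V % 2) ^ 2 := Nat.mul_div_le _ _
    _ ≤ Fintype.card V ^ 2 := Nat.sub_le _ _

section Counting

variable [Fintype V] [DecidableEq V] [DecidableRel G.Adj]

lemma degree_induce_eq_card_neighborFinset_inter (T : Finset V) (v : V) (hv : v ∈ T) :
    (G.induce (T : Set V)).degree ⟨v, hv⟩ = #(G.neighborFinset v ∩ T) := by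
  rw [← card_neighborFinset_eq_degree, ← card_map (Function.Embedding.subtype _)]
  congr 1
  ext x
  simp [and_comm]

lemma two_mul_sum_card_neighborFinset_inter_self_le (h : G.CliqueFree 3) (T : Finset V) :
    2 * ∑ v ∈ T, #(G.neighborFinset v ∩ T) ≤ #T ^ 2 := by
  have hmantel :=
    (h.comap (Embedding.induce (T : Set V)).isContained).four_mul_card_edgeFinset_le
  have hcard : Fintype.card (T : Set V) = #T := by simp
  have hsum := sum_degrees_eq_twice_card_edges (G.induce (T : Set V))
  have hdeg : ∑ v ∈ T, #(G.neighborFinset v ∩ T) =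
      ∑ x : (T : Set V), (G.induce (T : Set V)).degree x := by
    rw [← sum_coe_sort T]
    exact sum_congr rfl fun x _ => (degree_induce_eq_card_neighborFinset_inter T x x.2).symm
  rw [hcard] at hmantel
  omega

lemma sum_degree_eq_sum_card_neighborFinset_inter (S : Finset V) :
    ∑ v ∈ S, G.degree v = ∑ v, #(G.neighborFinset v ∩ S) := by
  have := sum_card_bipartiteAbove_eq_sum_card_bipartiteBelow (s := S) (t := univ) (r := G.Adj)
  convert this using 3 with v _ v
  · rw [← card_neighborFinset_eq_degree, neighborFinset_eq_filter]
    rfl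
  · ext x
    simp [bipartiteBelow, adj_comm, and_comm]

lemma four_mul_card_edgeFinset_le_of_card_neighborFinset_inter_le_two (h : G.CliqueFree 3)
    (S : Finset V) (hS : ∀ v, #(G.neighborFinset v ∩ S) ≤ 2) :
    4 * #G.edgeFinset ≤ 4 * Fintype.card V + 4 * #Sᶜ + #Sᶜ ^ 2 := by
  have hsplit (v : V) :
      G.degree v = #(G.neighborFinset v ∩ S) + #(G.neighborFinset v ∩ Sᶜ) := by
    rw [← card_neighborFinset_eq_degree, ← card_inter_add_card_sdiff _ S, sdiff_eq_inter_compl]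
  have hdeg : 2 * #G.edgeFinset = ∑ v, #(G.neighborFinset v ∩ S) +
      (∑ v ∈ Sᶜ, #(G.neighborFinset v ∩ S) + ∑ v ∈ Sᶜ, #(G.neighborFinset v ∩ Sᶜ)) := by
    rw [← sum_degrees_eq_twice_card_edges, ← sum_add_sum_compl S,
      sum_degree_eq_sum_card_neighborFinset_inter, ← sum_add_distrib]
    exact congrArg _ (sum_congr rfl fun v _ => hsplit v)
  have hS_univ : ∑ v, #(G.neighborFinset v ∩ S) ≤ 2 * Fintype.card V := by
    simpa [mul_comm] using sum_le_sum fun v (_ : v ∈ univ) => hS v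
  have hS_compl : ∑ v ∈ Sᶜ, #(G.neighborFinset v ∩ S) ≤ 2 * #Sᶜ := by
    simpa [mul_comm] using sum_le_sum fun v (_ : v ∈ Sᶜ) => hS v
  have hmantel := two_mul_sum_card_neighborFinset_inter_self_le h Sᶜ
  omega

end Counting

structure Walk.IsShortestOddClosedWalk {u : V} (w : G.Walk u u) : Prop where
  odd_length : Odd w.length
  length_le : ∀ (x : V) (q : G.Walk x x), Odd q.length → w.length ≤ q.length

lemma exists_isShortestOddClosedWalk (h : ¬ G.Colorable 2) :
    ∃ (u : V) (w : G.Walk u u), w.IsShortestOddClosedWalk := by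
  classical
  have hex : ∃ k, ∃ (u : V) (w : G.Walk u u), Odd w.length ∧ w.length = k := by
    simpa [two_colorable_iff_forall_loop_even] using h
  obtain ⟨u, w, hodd, hk⟩ := Nat.find_spec hex
  exact ⟨u, w, hodd, fun x q hq => hk ▸ Nat.find_min' hex ⟨x, q, hq, rfl⟩⟩

namespace Walk

variable {i j : ℕ}

lemma exists_walk_getVert_getVert {x y : V} (p : G.Walk x y) (hij : i ≤ j) (hj : j ≤ p.length) :
    ∃ q : G.Walk (p.getVert i) (p.getVert j), q.length = j - i :=
  ⟨((p.take j).drop i).copy (by rw [take_getVert, min_eq_right hij]) rfl, by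
    rw [length_copy, drop_length, take_length]
    omega⟩

namespace IsShortestOddClosedWalk

variable {u : V} {w : G.Walk u u}

lemma length_le_length_add (hw : w.IsShortestOddClosedWalk) (hij : i ≤ j) (hj : j ≤ w.length)
    (q : G.Walk (w.getVert i) (w.getVert j)) (hq : Odd (q.length + (j - i))) :
    w.length ≤ q.length + (j - i) := by
  obtain ⟨p, hp⟩ := w.exists_walk_getVert_getVert hij hj
  simpa [hp] using hw.length_le _ (q.append p.reverse) (by simpa [hp] using hq)

lemma sub_le_length (hw : w.IsShortestOddClosedWalk) (hij : i ≤ j) (hj : j ≤ w.length)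
    (q : G.Walk (w.getVert i) (w.getVert j)) (hq : Even (q.length + (j - i))) :
    j - i ≤ q.length := by
  -- close `q` up with the other arc of `w`, of length `w.length - (j - i)`
  have harc : ((w.drop j).append (w.take i)).length = w.length - (j - i) := by
    rw [length_append, drop_length, take_length, min_eq_left (hij.trans hj)]
    omega
  have hodd : Odd (q.append ((w.drop j).append (w.take i))).length := by
    rw [length_append, harc]
    have := hw.odd_length
    rw [Nat.odd_iff] at this ⊢
    rw [Nat.even_iff] at hq
    omega
  have := hw.length_le _ _ hodd
  rw [length_append, harc] at this
  omega

lemma injOn_getVert (hw : w.IsShortestOddClosedWalk) :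
    Set.InjOn w.getVert (Set.Iio w.length) := by
  intro i hi j hj hij
  wlog hlt : i < j generalizing i j
  · rcases (not_lt.mp hlt).eq_or_lt with h | h
    · exact h.symm
    · exact (this hj hi hij.symm h).symm
  simp only [Set.mem_Iio] at hi hj
  let q : G.Walk (w.getVert i) (w.getVert j) := nil.copy rfl hij
  have hq : q.length = 0 := by simp [q]
  rcases Nat.even_or_odd (q.length + (j - i)) with h | h
  · have := hw.sub_le_length hlt.le hj.le q h
    omega
  · have := hw.length_le_length_add hlt.le hj.le q h
    omega

lemma sub_eq_two_or_sub_eq_length_sub_two (hw : w.IsShortestOddClosedWalk) {v : V}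
    (hij : i < j) (hj : j < w.length) (hvi : G.Adj v (w.getVert i))
    (hvj : G.Adj v (w.getVert j)) : j - i = 2 ∨ j - i = w.length - 2 := by
  let q : G.Walk (w.getVert i) (w.getVert j) := cons hvi.symm (cons hvj nil)
  have hq : q.length = 2 := rfl
  have hodd := hw.odd_length
  rcases Nat.even_or_odd (q.length + (j - i)) with h | h
  · have := hw.sub_le_length hij.le hj.le q h
    rw [hq, Nat.even_iff] at h
    omega
  · have := hw.length_le_length_add hij.le hj.le q h
    rw [hq, Nat.odd_iff] at h
    rw [Nat.odd_iff] at hodd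
    omega

lemma five_le_length (hw : w.IsShortestOddClosedWalk) (h : G.CliqueFree 3) :
    5 ≤ w.length := by
  have hadj {k : ℕ} (hk : k < w.length) : G.Adj (w.getVert k) (w.getVert (k + 1)) :=
    w.adj_getVert_succ hk
  have hend : w.getVert w.length = w.getVert 0 := by simp
  obtain ⟨t, ht⟩ := hw.odd_length
  by_contra! hlt
  obtain hg | hg : w.length = 1 ∨ w.length = 3 := by omega
  · have h01 := hadj (k := 0) (by omega)
    rw [zero_add, ← hg, hend] at h01
    exact G.irrefl h01
  · classical
    have h20 := hadj (k := 2) (by omega)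
    rw [show 2 + 1 = w.length by omega, hend] at h20
    exact h {w.getVert 0, w.getVert 1, w.getVert 2}
      (is3Clique_triple_iff.mpr ⟨hadj (by omega), h20.symm, hadj (by omega)⟩)

lemma card_neighborFinset_inter_image_getVert_le_two [Fintype V] [DecidableEq V]
    [DecidableRel G.Adj] (hw : w.IsShortestOddClosedWalk) (h5 : 5 ≤ w.length) (v : V) :
    #(G.neighborFinset v ∩ (range w.length).image w.getVert) ≤ 2 := by
  set I := {i ∈ range w.length | G.Adj v (w.getVert i)}
  have hsub : G.neighborFinset v ∩ (range w.length).image w.getVert ⊆ I.image w.getVert := by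
    intro x hx
    simp only [mem_inter, mem_neighborFinset, mem_image, mem_filter, I] at hx ⊢
    obtain ⟨hvx, i, hi, rfl⟩ := hx
    exact ⟨i, ⟨hi, hvx⟩, rfl⟩
  refine (card_le_card hsub).trans (card_image_le.trans ?_)
  have hgap {i j : ℕ} (hi : i ∈ I) (hj : j ∈ I) (hne : i ≠ j) :
      (j - i = 2 ∨ j - i = w.length - 2) ∨ (i - j = 2 ∨ i - j = w.length - 2) := by
    simp only [mem_filter, mem_range, I] at hi hj
    rcases hne.lt_or_gt with h | h
    · exact .inl (hw.sub_eq_two_or_sub_eq_length_sub_two h hj.1 hi.2 hj.2)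
    · exact .inr (hw.sub_eq_two_or_sub_eq_length_sub_two h hi.1 hj.2 hi.2)
  have hlt {i : ℕ} (hi : i ∈ I) : i < w.length := mem_range.mp (mem_filter.mp hi).1
  by_contra! hI
  obtain ⟨a, ha, b, hb, c, hc, hab, hac, hbc⟩ := two_lt_card.mp hI
  have := hgap ha hb hab
  have := hgap ha hc hac
  have := hgap hb hc hbc
  have := hlt ha
  have := hlt hb
  have := hlt hc
  obtain ⟨t, ht⟩ := hw.odd_length
  omega

end IsShortestOddClosedWalk

end Walk

end SimpleGraph

/-- Every non-bipartite triangle-free graph of order `n` and size `m` satisfies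
`m ≤ (n-1)²/4 + 1`. -/
theorem stmt1 {n : ℕ} (G : SimpleGraph (Fin n)) [DecidableRel G.Adj]
    (hnb : ¬ G.Colorable 2) (htf : G.CliqueFree 3) :
    (G.edgeFinset.card : ℝ) ≤ ((n : ℝ) - 1) ^ 2 / 4 + 1 := by
  obtain ⟨u, w, hw⟩ := exists_isShortestOddClosedWalk hnb
  set g := w.length
  set S := (range g).image w.getVert
  have hS : #S = g := by
    rw [card_image_of_injOn (by rw [coe_range]; exact hw.injOn_getVert), card_range]
  have hgn : g ≤ n := by simpa [hS] using card_le_univ S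
  have hcount := four_mul_card_edgeFinset_le_of_card_neighborFinset_inter_le_two htf S
    (hw.card_neighborFinset_inter_image_getVert_le_two (hw.five_le_length htf))
  rw [card_compl, Fintype.card_fin, hS] at hcount
  have hcount' : 4 * (#G.edgeFinset : ℝ) ≤ 4 * n + 4 * (n - g) + (n - g) ^ 2 := by
    have := (Nat.cast_le (α := ℝ)).mpr hcount
    push_cast [Nat.cast_sub hgn] at this
    exact this
  have h5 : (5 : ℝ) ≤ g := by exact_mod_cast hw.five_le_length htf
  have hgn' : (g : ℝ) ≤ n := by exact_mod_cast hgn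
  -- `(n - 1)² + 4 - (4n + 4(n - g) + (n - g)²) = (g - 1)(g - 5) + 2(n - g)(g - 5)`
  nlinarith [mul_nonneg (sub_nonneg.mpr h5) (sub_nonneg.mpr hgn'),
    mul_nonneg (sub_nonneg.mpr h5) (by linarith : (0 : ℝ) ≤ g - 1)]
end

section
/- For every simple graph G, q(G) ≤ max{d(u) + m(u) : u ∈ V(G)}, where m(u) = (1/d(u)) Σ_{v ∈ N(u)} d(v) is the average degree of the neighbors of u. -/
/-!
If `Q x = μ x` with `x ≠ 0`, pick a vertex `u` maximising `|x u| / d(u)`, so that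
`|x v| ≤ c · d(v)` for all `v` with equality at `u`, where `c = |x u| / d(u) > 0`. The `u`-th
coordinate of the eigen-equation then gives
`|μ| c d(u) ≤ d(u) · c d(u) + ∑_{v ∼ u} c d(v)`, i.e. `μ ≤ |μ| ≤ d(u) + m(u)`.
In other words, `d(u) + m(u)` are the row sums of `D⁻¹ Q D`, which bound its spectral radius.
-/

open SimpleGraph Matrix Finset BigOperators

namespace Matrix

variable {n : Type*} [Fintype n]

theorem exists_mulVec_eq_smul_of_mem_spectrum {K : Type*} [Field K] [DecidableEq n]
    {A : Matrix n n K} {μ : K} (hμ : μ ∈ spectrum K A) : ∃ x ≠ 0, A *ᵥ x = μ • x := by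
  rw [← spectrum_toLin', ← Module.End.hasEigenvalue_iff_mem_spectrum] at hμ
  obtain ⟨x, hx⟩ := hμ.exists_hasEigenvector
  exact ⟨x, hx.2, by simpa only [toLin'_apply] using hx.apply_eq_smul⟩

/-- The witness `i` is an index at which `|x i| / w i` is largest. -/
theorem exists_abs_mul_le_mulVec_of_mulVec_eq_smul {A : Matrix n n ℝ} (hA : ∀ i j, 0 ≤ A i j)
    {w : n → ℝ} (hw : ∀ i, 0 < w i) {μ : ℝ} {x : n → ℝ} (hx : x ≠ 0) (hμ : A *ᵥ x = μ • x) :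
    ∃ i, |μ| * w i ≤ (A *ᵥ w) i := by
  obtain ⟨j, hj⟩ := Function.ne_iff.mp hx
  have : Nonempty n := ⟨j⟩
  obtain ⟨i, hi⟩ := Finite.exists_max fun k => |x k| / w k
  set c := |x i| / w i
  have hc : 0 < c := (div_pos (abs_pos.mpr hj) (hw j)).trans_le (hi j)
  have hxw : ∀ k, |x k| ≤ c * w k := fun k => (div_le_iff₀ (hw k)).mp (hi k)
  have hci : c * w i = |x i| := div_mul_cancel₀ _ (hw i).ne'
  refine ⟨i, le_of_mul_le_mul_left ?_ hc⟩
  calc c * (|μ| * w i) = |(A *ᵥ x) i| := by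
        rw [mul_left_comm, hci, hμ, Pi.smul_apply, smul_eq_mul, abs_mul]
    _ ≤ ∑ k, |A i k * x k| := abs_sum_le_sum_abs _ _
    _ ≤ ∑ k, A i k * (c * w k) := by
        gcongr with k
        rw [abs_mul, abs_of_nonneg (hA i k)]
        exact mul_le_mul_of_nonneg_left (hxw k) (hA i k)
    _ = c * (A *ᵥ w) i := by
        rw [mulVec, dotProduct, mul_sum]
        exact sum_congr rfl fun k _ => mul_left_comm _ _ _

end Matrix

section signlessLaplacian

variable {V : Type*} [Fintype V] [DecidableEq V] (G : SimpleGraph V) [DecidableRel G.Adj]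

theorem signlessLaplacian_apply_nonneg (u v : V) : 0 ≤ signlessLaplacian G u v := by
  simp only [signlessLaplacian, Matrix.add_apply, degMatrix, diagonal_apply, adjMatrix_apply]
  split_ifs <;> positivity

theorem signlessLaplacian_mulVec_apply (x : V → ℝ) (u : V) :
    (signlessLaplacian G *ᵥ x) u = G.degree u * x u + ∑ v ∈ G.neighborFinset u, x v := by
  rw [signlessLaplacian, add_mulVec]
  simp only [Pi.add_apply, degMatrix_mulVec_apply, adjMatrix_mulVec_apply]
  congr!

/-- The paper's `m(u)`. -/
noncomputable def avgNeighborDegree (u : V) : ℝ :=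
  (∑ v ∈ G.neighborFinset u, (G.degree v : ℝ)) / G.degree u

theorem exists_le_degree_add_avgNeighborDegree_of_mem_spectrum (hd : ∀ v, 0 < G.degree v)
    {μ : ℝ} (hμ : μ ∈ spectrum ℝ (signlessLaplacian G)) :
    ∃ u, μ ≤ G.degree u + avgNeighborDegree G u := by
  have hd' : ∀ v, (0 : ℝ) < G.degree v := fun v => mod_cast hd v
  obtain ⟨x, hx, hxμ⟩ := exists_mulVec_eq_smul_of_mem_spectrum hμ
  obtain ⟨u, hu⟩ := exists_abs_mul_le_mulVec_of_mulVec_eq_smul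
    (signlessLaplacian_apply_nonneg G) hd' hx hxμ
  refine ⟨u, (le_abs_self μ).trans ?_⟩
  rw [signlessLaplacian_mulVec_apply, ← le_div_iff₀ (hd' u)] at hu
  rwa [add_div, mul_div_cancel_right₀ _ (hd' u).ne'] at hu

end signlessLaplacian

theorem stmt3_general {V : Type*} [Fintype V] [DecidableEq V]
    (G : SimpleGraph V) [DecidableRel G.Adj] (hd : ∀ v, 0 < G.degree v) :
    qIndex G ≤ ⨆ u : V, ((G.degree u : ℝ) +
      (∑ v ∈ G.neighborFinset u, (G.degree v : ℝ)) / G.degree u) := by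
  refine Real.sSup_le (fun μ hμ => ?_) (Real.iSup_nonneg fun u => by positivity)
  obtain ⟨u, hu⟩ := exists_le_degree_add_avgNeighborDegree_of_mem_spectrum G hd hμ
  exact le_ciSup_of_le (Finite.bddAbove_range _) u hu

/-- For every graph `G` with minimum degree at least one,
`q(G) ≤ max {d(u) + m(u) : u ∈ V(G)}`, where `m(u)` is the average degree of the
neighbours of `u`. -/
theorem stmt3 {V : Type*} [Fintype V] [DecidableEq V] [Nonempty V]
    (G : SimpleGraph V) [DecidableRel G.Adj] (hd : ∀ v, 0 < G.degree v) :
    qIndex G ≤ ⨆ u : V, ((G.degree u : ℝ) +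
      (∑ v ∈ G.neighborFinset u, (G.degree v : ℝ)) / G.degree u) :=
  stmt3_general G hd
end

section
/- The signless Laplacian spectral radius of C₅•K_{1,m-5} is the largest root of x⁴ - (m+3)x³ + (5m-5)x² + (8-5m)x + 4 = 0. -/
open SimpleGraph Matrix Finset BigOperators

/-! Write `t = m - 5`. Under the reflection of the 5-cycle fixing the centre, the eigenvector
equations of `Q(C₅ • K_{1,t})` split: antisymmetric eigenvectors have eigenvalue a root of
`x² - 3x + 1`, eigenvectors vanishing on the cycle have eigenvalue `1`, and symmetric ones have
eigenvalue a root of the quartic `c5starPoly t`; conversely every root of this quartic carries a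
symmetric eigenvector. The quartic changes sign on `[3, 4]`, so the `Q`-index is at least `3`,
above the roots of `(x - 1)(x² - 3x + 1)`; hence it is the largest root of the quartic. -/

theorem Matrix.mem_spectrum_iff_exists_mulVec_eq_smul {n : Type*} [Fintype n] [DecidableEq n]
    {K : Type*} [Field K] (M : Matrix n n K) (x : K) :
    x ∈ spectrum K M ↔ ∃ v : n → K, v ≠ 0 ∧ M *ᵥ v = x • v := by
  rw [← Matrix.spectrum_toLin', ← Module.End.hasEigenvalue_iff_mem_spectrum]
  simp only [Module.End.hasEigenvalue_iff, Module.End.mem_eigenspace_iff, Submodule.ne_bot_iff,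
    Matrix.toLin'_apply]
  exact ⟨fun ⟨v, h, h0⟩ => ⟨v, h0, h⟩, fun ⟨v, h0, h⟩ => ⟨v, h, h0⟩⟩

section SignlessLaplacian

variable {V : Type*} [Fintype V] [DecidableEq V] (G : SimpleGraph V)

theorem signlessLaplacian_eq [DecidableRel G.Adj] :
    signlessLaplacian G = G.degMatrix ℝ + G.adjMatrix ℝ := by
  unfold signlessLaplacian
  congr!

theorem signlessLaplacian_mulVec_apply_s8 [DecidableRel G.Adj] (v : V → ℝ) (i : V) :
    (signlessLaplacian G *ᵥ v) i = ∑ j, if G.Adj i j then v i + v j else 0 := by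
  rw [signlessLaplacian_eq, add_mulVec, Pi.add_apply, degMatrix_mulVec_apply,
    adjMatrix_mulVec_apply, ← card_neighborFinset_eq_degree, neighborFinset_eq_filter,
    Finset.sum_filter]
  simp [Finset.sum_ite, Finset.sum_add_distrib]

theorem isHermitian_signlessLaplacian : (signlessLaplacian G).IsHermitian := by
  classical
  rw [signlessLaplacian_eq, Matrix.IsHermitian, Matrix.conjTranspose_eq_transpose_of_trivial]
  exact (isSymm_degMatrix (G := G) (R := ℝ)).add (isSymm_adjMatrix (G := G) (α := ℝ))

theorem le_qIndex_of_mem_spectrum {x : ℝ} (hx : x ∈ spectrum ℝ (signlessLaplacian G)) :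
    x ≤ qIndex G :=
  le_csSup (Matrix.finite_spectrum _).bddAbove hx

theorem qIndex_mem_spectrum [Nonempty V] : qIndex G ∈ spectrum ℝ (signlessLaplacian G) :=
  Set.Nonempty.csSup_mem
    ⟨_, (isHermitian_signlessLaplacian G).eigenvalues_mem_spectrum_real (Classical.arbitrary V)⟩
    (Matrix.finite_spectrum _)

end SignlessLaplacian

/-- The quartic of the statement, written in `t = m - 5`. -/
def c5starPoly (t : ℕ) (x : ℝ) : ℝ :=
  x ^ 4 - (t + 8) * x ^ 3 + (5 * t + 20) * x ^ 2 - (5 * t + 17) * x + 4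

theorem exists_three_le_c5starPoly_eq_zero {t : ℕ} (ht : 1 ≤ t) :
    ∃ r, 3 ≤ r ∧ c5starPoly t r = 0 := by
  have ht' : (1 : ℝ) ≤ t := by exact_mod_cast ht
  have hcont : ContinuousOn (c5starPoly t) (Set.Icc 3 4) := by
    unfold c5starPoly
    fun_prop
  have hsign : (0 : ℝ) ∈ Set.Icc (c5starPoly t 4) (c5starPoly t 3) := by
    constructor <;> norm_num [c5starPoly] <;> linarith
  obtain ⟨r, hr, hr0⟩ := intermediate_value_Icc' (by norm_num) hcont hsign
  exact ⟨r, hr.1, hr0⟩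

namespace C5star

variable {t : ℕ}

instance : DecidableRel (C5star t).Adj := fun a b =>
  inferInstanceAs (Decidable
    ((∃ i j : Fin 5, a = Sum.inl i ∧ b = Sum.inl j ∧ (i = j + 1 ∨ j = i + 1)) ∨
    (a = Sum.inl 0 ∧ ∃ j : Fin t, b = Sum.inr j) ∨
    (b = Sum.inl 0 ∧ ∃ j : Fin t, a = Sum.inr j)))

@[simp] theorem adj_inl_inl {i j : Fin 5} :
    (C5star t).Adj (Sum.inl i) (Sum.inl j) ↔ i = j + 1 ∨ j = i + 1 := by
  simp [C5star]

@[simp] theorem adj_inl_inr {i : Fin 5} {j : Fin t} :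
    (C5star t).Adj (Sum.inl i) (Sum.inr j) ↔ i = 0 := by
  simp [C5star]

@[simp] theorem adj_inr_inl {i : Fin 5} {j : Fin t} :
    (C5star t).Adj (Sum.inr j) (Sum.inl i) ↔ i = 0 := by
  simp [C5star]

@[simp] theorem not_adj_inr_inr {j j' : Fin t} : ¬ (C5star t).Adj (Sum.inr j) (Sum.inr j') := by
  simp [C5star]

variable (v : Fin 5 ⊕ Fin t → ℝ)

theorem signlessLaplacian_mulVec_center : (signlessLaplacian (C5star t) *ᵥ v) (Sum.inl 0)
    = (t + 2) * v (Sum.inl 0) + (v (Sum.inl 1) + v (Sum.inl 4) + ∑ j, v (Sum.inr j)) := by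
  simp only [signlessLaplacian_mulVec_apply_s8, Fintype.sum_sum_type, Fin.sum_univ_five, adj_inl_inl,
    adj_inl_inr, Fin.reduceAdd, Fin.reduceEq, zero_ne_one, or_self, or_true, or_false, ite_true,
    ite_false, zero_add, add_zero, Finset.sum_add_distrib, Finset.sum_const, Finset.card_univ,
    Fintype.card_fin, nsmul_eq_mul]
  ring

theorem signlessLaplacian_mulVec_cycle (i : Fin 5) (hi : i ≠ 0) :
    (signlessLaplacian (C5star t) *ᵥ v) (Sum.inl i)
      = 2 * v (Sum.inl i) + (v (Sum.inl (i - 1)) + v (Sum.inl (i + 1))) := by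
  fin_cases i
  · exact absurd rfl hi
  all_goals
    simp only [signlessLaplacian_mulVec_apply_s8, Fintype.sum_sum_type, Fin.sum_univ_five,
      adj_inl_inl, adj_inl_inr, Fin.reduceFinMk, Fin.mk_one, Fin.reduceAdd, Fin.reduceSub,
      Fin.reduceEq, one_ne_zero, or_self, or_true, or_false, ite_true, ite_false, zero_add,
      add_zero, Finset.sum_const_zero]
    ring

theorem signlessLaplacian_mulVec_leaf (j : Fin t) :
    (signlessLaplacian (C5star t) *ᵥ v) (Sum.inr j) = v (Sum.inr j) + v (Sum.inl 0) := by
  simp [signlessLaplacian_mulVec_apply_s8, Fintype.sum_sum_type]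

theorem eq_zero_of_eigen_equations {x a b₁ c₂ c₃ b₄ s : ℝ}
    (h₀ : (t + 2) * a + (b₁ + b₄ + s) = x * a) (h₁ : 2 * b₁ + (a + c₂) = x * b₁)
    (h₂ : 2 * c₂ + (b₁ + c₃) = x * c₂) (h₃ : 2 * c₃ + (c₂ + b₄) = x * c₃)
    (h₄ : 2 * b₄ + (c₃ + a) = x * b₄) (hs : s + t * a = x * s)
    (hx : (x ^ 2 - 3 * x + 1) * c5starPoly t x ≠ 0) :
    a = 0 ∧ b₁ = 0 ∧ c₂ = 0 ∧ c₃ = 0 ∧ b₄ = 0 := by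
  obtain ⟨hquad, hpoly⟩ := mul_ne_zero_iff.mp hx
  -- antisymmetric and symmetric parts under the reflection of the cycle fixing `a`
  have hanti : (x ^ 2 - 3 * x + 1) * (c₂ - c₃) = 0 := by
    linear_combination -h₁ + h₄ - (x - 2) * h₂ + (x - 2) * h₃
  have hsym : c5starPoly t x * (c₂ + c₃) = 0 := by
    unfold c5starPoly
    linear_combination -2 * (x - 1) * h₀ - 2 * hs - (x ^ 2 - (t + 3) * x + 2) * (h₁ + h₄)
      - ((x ^ 2 - (t + 3) * x + 2) * (x - 2) - 2 * (x - 1)) * (h₂ + h₃)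
  have hdiff : c₂ - c₃ = 0 := (mul_eq_zero.mp hanti).resolve_left hquad
  have hplus : c₂ + c₃ = 0 := (mul_eq_zero.mp hsym).resolve_left hpoly
  obtain rfl : c₂ = 0 := by linarith
  obtain rfl : c₃ = 0 := by linarith
  obtain rfl : b₁ = 0 := by linarith
  obtain rfl : b₄ = 0 := by linarith
  exact ⟨by linarith, rfl, rfl, rfl, rfl⟩

theorem eigenvalue_isRoot {x : ℝ} (hx : x ∈ spectrum ℝ (signlessLaplacian (C5star t))) :
    (x - 1) * (x ^ 2 - 3 * x + 1) * c5starPoly t x = 0 := by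
  obtain ⟨v, hv, hQv⟩ := (Matrix.mem_spectrum_iff_exists_mulVec_eq_smul _ x).mp hx
  have eig : ∀ i, (signlessLaplacian (C5star t) *ᵥ v) i = x * v i := fun i => by
    rw [hQv, Pi.smul_apply, smul_eq_mul]
  have hleaf : ∀ j, (x - 1) * v (Sum.inr j) = v (Sum.inl 0) := fun j => by
    linear_combination (eig (Sum.inr j)).symm.trans (signlessLaplacian_mulVec_leaf v j)
  by_contra hroot
  rw [mul_assoc] at hroot
  obtain ⟨hx1, hne⟩ := mul_ne_zero_iff.mp hroot
  have hsum : ∑ j, v (Sum.inr j) + t * v (Sum.inl 0) = x * ∑ j, v (Sum.inr j) := by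
    have := Finset.sum_congr rfl fun j (_ : j ∈ Finset.univ) => hleaf j
    rw [← Finset.mul_sum, Finset.sum_const, Finset.card_univ, Fintype.card_fin, nsmul_eq_mul]
      at this
    linear_combination -this
  obtain ⟨ha, hb₁, hc₂, hc₃, hb₄⟩ := eq_zero_of_eigen_equations
    ((signlessLaplacian_mulVec_center v).symm.trans (eig _))
    ((signlessLaplacian_mulVec_cycle v 1 (by decide)).symm.trans (eig _))
    ((signlessLaplacian_mulVec_cycle v 2 (by decide)).symm.trans (eig _))
    ((signlessLaplacian_mulVec_cycle v 3 (by decide)).symm.trans (eig _))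
    ((signlessLaplacian_mulVec_cycle v 4 (by decide)).symm.trans (eig _)) hsum hne
  refine hv (funext fun i => ?_)
  rcases i with i | j
  · fin_cases i <;> assumption
  · simpa [ha, hx1] using hleaf j

theorem mem_spectrum_of_isRoot (ht : 1 ≤ t) {x : ℝ} (hx : c5starPoly t x = 0) :
    x ∈ spectrum ℝ (signlessLaplacian (C5star t)) := by
  have hx1 : x - 1 ≠ 0 := by
    intro h
    obtain rfl : x = 1 := by linarith
    have ht' : (1 : ℝ) ≤ t := by exact_mod_cast ht
    norm_num [c5starPoly] at hx
    linarith
  -- the symmetric eigenvector, scaled so that its entries are polynomials in `x`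
  set w : Fin 5 ⊕ Fin t → ℝ :=
    Sum.elim ![(x - 1) * (x ^ 2 - 5 * x + 5), (x - 1) * (x - 3), x - 1, x - 1, (x - 1) * (x - 3)]
      fun _ => x ^ 2 - 5 * x + 5
  refine (Matrix.mem_spectrum_iff_exists_mulVec_eq_smul _ x).mpr ⟨w, fun hw => hx1 ?_, ?_⟩
  · simpa [w] using congr_fun hw (Sum.inl 2)
  funext i
  rw [Pi.smul_apply, smul_eq_mul]
  rcases i with i | j
  · fin_cases i
    · simp only [w, signlessLaplacian_mulVec_center, Fin.zero_eta, Sum.elim_inl, Sum.elim_inr,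
        Matrix.cons_val, cons_val_zero, cons_val_one, Finset.sum_const, Finset.card_univ,
        Fintype.card_fin, nsmul_eq_mul]
      unfold c5starPoly at hx
      linear_combination -hx
    all_goals
      simp only [w, ne_eq, Fin.mk_one, Fin.reduceFinMk, Fin.reduceEq, one_ne_zero,
        not_false_eq_true, signlessLaplacian_mulVec_cycle, Sum.elim_inl, Fin.reduceSub, sub_self,
        Fin.reduceAdd, Matrix.cons_val, cons_val_zero, cons_val_one]
      ring
  · simp only [w, signlessLaplacian_mulVec_leaf, Sum.elim_inl, Sum.elim_inr, cons_val_zero]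
    ring

theorem three_le_qIndex (ht : 1 ≤ t) : 3 ≤ qIndex (C5star t) := by
  obtain ⟨r, hr, hr0⟩ := exists_three_le_c5starPoly_eq_zero ht
  exact hr.trans (le_qIndex_of_mem_spectrum _ (mem_spectrum_of_isRoot ht hr0))

theorem c5starPoly_qIndex_eq_zero (ht : 1 ≤ t) : c5starPoly t (qIndex (C5star t)) = 0 := by
  have hq := three_le_qIndex ht
  refine (mul_eq_zero.mp (eigenvalue_isRoot (qIndex_mem_spectrum _))).resolve_left ?_
  exact mul_ne_zero (by linarith) (by nlinarith)

end C5star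

/-- The `Q`-index of `C₅ • K_{1,m-5}` is the largest root of
`x⁴ - (m+3)x³ + (5m-5)x² + (8-5m)x + 4 = 0`. -/
theorem stmt8 {m : ℕ} (hm : 6 ≤ m) :
    (qIndex (C5star (m - 5))) ^ 4 - ((m : ℝ) + 3) * (qIndex (C5star (m - 5))) ^ 3
        + (5 * (m : ℝ) - 5) * (qIndex (C5star (m - 5))) ^ 2
        + (8 - 5 * (m : ℝ)) * qIndex (C5star (m - 5)) + 4 = 0 ∧
    ∀ x : ℝ, x ^ 4 - ((m : ℝ) + 3) * x ^ 3 + (5 * (m : ℝ) - 5) * x ^ 2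
        + (8 - 5 * (m : ℝ)) * x + 4 = 0 → x ≤ qIndex (C5star (m - 5)) := by
  set t := m - 5 with ht_def
  have ht : 1 ≤ t := by omega
  have hm_cast : (m : ℝ) = t + 5 := by
    rw [ht_def, Nat.cast_sub (by omega)]
    ring
  have hpoly : ∀ y : ℝ, y ^ 4 - ((m : ℝ) + 3) * y ^ 3 + (5 * (m : ℝ) - 5) * y ^ 2
      + (8 - 5 * (m : ℝ)) * y + 4 = c5starPoly t y := fun y => by
    rw [c5starPoly, hm_cast]
    ring
  simp only [hpoly]
  exact ⟨C5star.c5starPoly_qIndex_eq_zero ht,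
    fun x hx => le_qIndex_of_mem_spectrum _ (C5star.mem_spectrum_of_isRoot ht hx)⟩
end

section
/- In a non-bipartite graph G with m edges, if some vertex has degree at least m - 2, then G contains a triangle. -/
open SimpleGraph Matrix Finset BigOperators

/-
The neighbourhood `N` of `v` is independent because `G` is triangle-free. For a set `T` avoiding `v`,
colour `N ∪ T` true and everything else false: every monochromatic edge then misses `v`, and at most
two edges miss `v`. If `G` were not bipartite, every such colouring would have a monochromatic
edge. Taking `T = ∅` gives an edge `ab` outside `N ∪ {v}`, `T = {a}` gives an edge `xy`, and
`T = {b, x}` (for a suitable orientation of `xy`) gives a third one; each edge is bichromatic under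
the later colourings, so the three edges are distinct.
-/

theorem Sym2.mk_ne_mk_of_eq_of_ne {α β : Type*} {f : α → β} {x y x' y' : α}
    (h : f x = f y) (h' : f x' ≠ f y') : s(x, y) ≠ s(x', y') := by
  intro heq
  rcases Sym2.eq_iff.1 heq with ⟨rfl, rfl⟩ | ⟨rfl, rfl⟩
  exacts [h' h, h' h.symm]

namespace SimpleGraph

variable {V : Type*} {G : SimpleGraph V}

theorem exists_adj_eq_of_not_colorable_two (h : ¬G.Colorable 2) (c : V → Bool) :
    ∃ x y, G.Adj x y ∧ c x = c y := by
  by_contra! hc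
  simpa using h <| (Coloring.mk c fun hxy => hc _ _ hxy).colorable

section StarColor

variable [DecidableEq V] [DecidableRel G.Adj]

variable (G) in
def starColor (v : V) (T : Finset V) (u : V) : Bool :=
  decide (G.Adj v u ∨ u ∈ T)

@[simp]
theorem starColor_eq_true {v u : V} {T : Finset V} :
    starColor G v T u = true ↔ G.Adj v u ∨ u ∈ T := by
  simp [starColor]

theorem starColor_eq_iff {v x y : V} {T : Finset V} :
    starColor G v T x = starColor G v T y ↔ (G.Adj v x ∨ x ∈ T ↔ G.Adj v y ∨ y ∈ T) := by
  rw [Bool.eq_iff_iff, starColor_eq_true, starColor_eq_true]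

theorem deleteIncidenceSet_adj_of_starColor_eq {v x y : V} {T : Finset V} (hT : v ∉ T)
    (hxy : G.Adj x y) (h : starColor G v T x = starColor G v T y) :
    (G.deleteIncidenceSet v).Adj x y := by
  rw [starColor_eq_iff] at h
  refine deleteIncidenceSet_adj.2 ⟨hxy, ?_, ?_⟩ <;> rintro rfl
  · exact hT (h.2 (Or.inl hxy) |>.resolve_left G.irrefl)
  · exact hT (h.1 (Or.inl hxy.symm) |>.resolve_left G.irrefl)

theorem CliqueFree.colorable_two_of_card_edgeFinset_deleteIncidenceSet_le_two [Fintype V]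
    (hG : G.CliqueFree 3) (v : V) (h : #(G.deleteIncidenceSet v).edgeFinset ≤ 2) :
    G.Colorable 2 := by
  by_contra hnb
  have triangle {x y : V} (hx : G.Adj v x) (hy : G.Adj v y) (hxy : G.Adj x y) : False :=
    isIndepSet_neighborSet_of_triangleFree _ hG v hx hy hxy.ne hxy
  set c := starColor G v
  have mono (T : Finset V) (hT : v ∉ T) :
      ∃ x y, (G.deleteIncidenceSet v).Adj x y ∧ c T x = c T y := by
    obtain ⟨x, y, hxy, hc⟩ := exists_adj_eq_of_not_colorable_two hnb (c T)
    exact ⟨x, y, deleteIncidenceSet_adj_of_starColor_eq hT hxy hc, hc⟩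
  obtain ⟨a, b, habH, hcab⟩ := mono ∅ (notMem_empty v)
  obtain ⟨hab, hav, hbv⟩ := deleteIncidenceSet_adj.1 habH
  have hva : ¬G.Adj v a := fun hva =>
    triangle hva (by simpa [c, starColor_eq_iff, hva] using hcab) hab
  have hvb : ¬G.Adj v b := fun hvb =>
    triangle (by simpa [c, starColor_eq_iff, hvb] using hcab) hvb hab
  -- the orientation `x ≠ a`, `y ≠ b` is what lets `{b, x}` separate both `ab` and `xy`
  obtain ⟨x, y, hxyH, hcxy, hxa, hyb⟩ : ∃ x y, (G.deleteIncidenceSet v).Adj x y ∧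
      c {a} x = c {a} y ∧ x ≠ a ∧ y ≠ b := by
    obtain ⟨x, y, hxy, hc⟩ := mono {a} (by simpa using hav.symm)
    have hne := (deleteIncidenceSet_adj.1 hxy).1.ne
    by_cases hswap : x = a ∨ y = b
    · have := hab.ne
      exact ⟨y, x, hxy.symm, hc.symm, by grind, by grind⟩
    · exact ⟨x, y, hxy, hc, by tauto, by tauto⟩
  obtain ⟨hxy, hxv, -⟩ := deleteIncidenceSet_adj.1 hxyH
  have hvy : ¬G.Adj v y := fun hvy => by
    have : G.Adj v x ∨ x = a := by simpa [c, starColor_eq_iff, hvy] using hcxy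
    exact triangle (this.resolve_right hxa) hvy hxy
  obtain ⟨p, q, hpqH, hcpq⟩ := mono {b, x} (by simp [hbv.symm, hxv.symm])
  have hsep_ab : c {a} a ≠ c {a} b := by simp [c, starColor_eq_iff, hvb, hab.ne.symm]
  have hsep_ab' : c {b, x} a ≠ c {b, x} b := by
    simp [c, starColor_eq_iff, hva, hab.ne, hxa.symm]
  have hsep_xy : c {b, x} x ≠ c {b, x} y := by simp [c, starColor_eq_iff, hvy, hyb, hxy.ne.symm]
  refine h.not_gt (two_lt_card.2 ⟨s(a, b), mem_edgeFinset.2 habH, s(x, y), mem_edgeFinset.2 hxyH,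
    s(p, q), mem_edgeFinset.2 hpqH, ?_, ?_, ?_⟩)
  · exact (Sym2.mk_ne_mk_of_eq_of_ne hcxy hsep_ab).symm
  · exact (Sym2.mk_ne_mk_of_eq_of_ne hcpq hsep_ab').symm
  · exact (Sym2.mk_ne_mk_of_eq_of_ne hcpq hsep_xy).symm

end StarColor

end SimpleGraph

/-- In a non-bipartite graph with `m` edges, if some vertex has degree at least `m - 2`,
then the graph contains a triangle. -/
theorem stmt15 {V : Type*} [Fintype V] [DecidableEq V]
    (G : SimpleGraph V) [DecidableRel G.Adj]
    (hnb : ¬ G.Colorable 2) (v : V)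
    (hd : (G.edgeFinset.card : ℤ) - 2 ≤ G.degree v) :
    ¬ G.CliqueFree 3 := by
  intro hG
  refine hnb (hG.colorable_two_of_card_edgeFinset_deleteIncidenceSet_le_two v ?_)
  have := G.card_edgeFinset_deleteIncidenceSet v
  omega
end

section
/- Let G be a triangle-free graph with m edges and let u be a vertex with 2 ≤ d(u) ≤ m - 4, where m ≥ 8. Then d(u) + m(u) ≤ m - 2, where m(u) = (1/d(u)) Σ_{v∈N(u)} d(v). -/
/-! Because `N(u)` is independent in a triangle-free graph, distinct neighbours of `u` have
disjoint sets of incident edges, so `Σ_{v ∈ N(u)} d(v) ≤ m`. It remains to bound `d + m / d`,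
which is convex in `d` and at most `m - 2` at both ends of `[2, m - 4]` once `m ≥ 8`. -/

open SimpleGraph Matrix Finset BigOperators

namespace SimpleGraph

variable {V : Type*} [Fintype V] {G : SimpleGraph V} [DecidableRel G.Adj]

theorem IsIndepSet.sum_degree_le_card_edgeFinset {s : Finset V} (hs : G.IsIndepSet (s : Set V)) :
    ∑ v ∈ s, G.degree v ≤ #G.edgeFinset := by
  classical
  have hdisj : (s : Set V).PairwiseDisjoint fun v => G.incidenceFinset v := by
    intro v hv w hw hvw
    rw [Function.onFun, ← Finset.disjoint_coe, coe_incidenceFinset, coe_incidenceFinset,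
      Set.disjoint_iff_inter_eq_empty]
    exact G.incidenceSet_inter_incidenceSet_of_not_adj (hs hv hw hvw) hvw
  calc ∑ v ∈ s, G.degree v = #(s.biUnion fun v => G.incidenceFinset v) := by
        simp only [card_biUnion hdisj, card_incidenceFinset_eq_degree]
    _ ≤ #G.edgeFinset := card_le_card (biUnion_subset.2 fun v _ => G.incidenceFinset_subset v)

theorem CliqueFree.sum_degree_neighborFinset_le (h : G.CliqueFree 3) (u : V) :
    ∑ v ∈ G.neighborFinset u, G.degree v ≤ #G.edgeFinset :=
  IsIndepSet.sum_degree_le_card_edgeFinset <| by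
    simpa only [coe_neighborFinset] using isIndepSet_neighborSet_of_triangleFree G h u

end SimpleGraph

theorem add_div_le_sub_two {d m : ℝ} (h2 : 2 ≤ d) (h4 : d ≤ m - 4) (hm : 8 ≤ m) :
    d + m / d ≤ m - 2 := by
  have hd : 0 < d := by linarith
  rw [← sub_nonneg]
  have key : 0 ≤ (d - 2) * (m - 4 - d) + (m - 8) := by
    have := mul_nonneg (sub_nonneg.2 h2) (sub_nonneg.2 h4)
    linarith
  calc 0 ≤ ((d - 2) * (m - 4 - d) + (m - 8)) / d := div_nonneg key hd.le
    _ = m - 2 - (d + m / d) := by field_simp; ring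

theorem stmt18_general {V : Type*} [Fintype V]
    (G : SimpleGraph V) [DecidableRel G.Adj]
    {m : ℕ} (hm : G.edgeFinset.card = m) (hm8 : 8 ≤ m) (htf : G.CliqueFree 3)
    (u : V) (h2 : 2 ≤ G.degree u) (h4 : G.degree u ≤ m - 4) :
    (G.degree u : ℝ) + (∑ v ∈ G.neighborFinset u, (G.degree v : ℝ)) / G.degree u
      ≤ (m : ℝ) - 2 := by
  have hd : (0 : ℝ) < G.degree u := by exact_mod_cast (by omega : 0 < G.degree u)
  have hsum : ∑ v ∈ G.neighborFinset u, (G.degree v : ℝ) ≤ m := by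
    exact_mod_cast hm ▸ htf.sum_degree_neighborFinset_le u
  calc (G.degree u : ℝ) + (∑ v ∈ G.neighborFinset u, (G.degree v : ℝ)) / G.degree u
      ≤ G.degree u + m / G.degree u := by gcongr
    _ ≤ m - 2 := add_div_le_sub_two (by exact_mod_cast h2)
        (by rw [le_sub_iff_add_le]; exact_mod_cast (by omega : G.degree u + 4 ≤ m))
        (by exact_mod_cast hm8)

/-- Let `G` be a triangle-free graph with `m ≥ 8` edges and let `u` be a vertex with
`2 ≤ d(u) ≤ m - 4`. Then `d(u) + m(u) ≤ m - 2`, where `m(u)` is the average degree of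
the neighbours of `u`. -/
theorem stmt18 {V : Type*} [Fintype V] [DecidableEq V]
    (G : SimpleGraph V) [DecidableRel G.Adj]
    {m : ℕ} (hm : G.edgeFinset.card = m) (hm8 : 8 ≤ m) (htf : G.CliqueFree 3)
    (u : V) (h2 : 2 ≤ G.degree u) (h4 : G.degree u ≤ m - 4) :
    (G.degree u : ℝ) + (∑ v ∈ G.neighborFinset u, (G.degree v : ℝ)) / G.degree u
      ≤ (m : ℝ) - 2 :=
  stmt18_general G hm hm8 htf u h2 h4
end
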